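/- In the A_n^{(1)} crystal B(lΛ̄_k) of type A_n (semistandard rectangular tableaux with k rows and l columns over {1,...,n+1}), for each a with associated g = ⌊(a-1)/(n+1-k)⌋ and r = a-1-(n+1-k)g, the set B_a (obtained by the recursion B_0 = {tableau with m_{i,i'} = i} and B_a = ⋃_{m≥0} f_{k-g+r}^m B_{a-1} \ {0}) equals {(m_{i,i'}) : m_{i,i'} = i for i < k-g, m_{k-g,i'} ≤ k-g+r+1}. -/
import Mathlib


/- The type A_n crystal B(lΛ̄_k): rectangular semistandard tableaux with k rows
and l columns, entries in {1,…,n+1}.  A tableau is encoded as a function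
m : ℕ → ℕ → ℕ, where `m i c` is the entry in row `i`, column `c`
(rows 1..k, columns 1..l; `m i c = 0` outside this range).  Column `c = 1` is
the rightmost tensor factor under the embedding
B(lΛ̄_k) ↪ B(Λ̄_k)^{⊗l}, (m_{i,i'}) ↦ (m^{(l)}) ⊗ ⋯ ⊗ (m^{(1)}). -/

namespace ATab

/-- semistandardness: entries in 1..n+1, rows weakly increasing, columns
strictly increasing, and `0` outside the `k × l` rectangle. -/
def isTab (n k l : ℕ) (m : ℕ → ℕ → ℕ) : Prop :=
  (∀ i c, 1 ≤ i → i ≤ k → 1 ≤ c → c ≤ l → 1 ≤ m i c ∧ m i c ≤ n + 1) ∧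
  (∀ i c, 1 ≤ i → i ≤ k → 1 ≤ c → c < l → m i c ≤ m i (c + 1)) ∧
  (∀ i c, 1 ≤ i → i < k → 1 ≤ c → c ≤ l → m i c < m (i + 1) c) ∧
  (∀ i c, i = 0 ∨ k < i ∨ c = 0 ∨ l < c → m i c = 0)

/-- column `c` contains the entry `j` -/
def colHas (k : ℕ) (m : ℕ → ℕ → ℕ) (c j : ℕ) : Prop :=
  ∃ i ∈ Finset.Icc 1 k, m i c = j

/-- column `c` contributes a `+` to the `j`-signature
(contains `j` but not `j+1`) -/
def colPlus (k : ℕ) (m : ℕ → ℕ → ℕ) (c j : ℕ) : Prop :=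
  colHas k m c j ∧ ¬ colHas k m c (j + 1)

/-- column `c` contributes a `−` to the `j`-signature
(contains `j+1` but not `j`) -/
def colMinus (k : ℕ) (m : ℕ → ℕ → ℕ) (c j : ℕ) : Prop :=
  colHas k m c (j + 1) ∧ ¬ colHas k m c j

open Classical in
/-- Signature-rule scan for `f_j`.  The columns are processed from the
rightmost tensor factor (column 1) towards the leftmost (column `c`),
maintaining the number of unmatched `−`'s, the number of unbracketed `+`'s
(which is `φ_j`), and the column of the leftmost unbracketed `+` (on which
`f_j` acts). -/
noncomputable def scan (k j : ℕ) (m : ℕ → ℕ → ℕ) : ℕ → ℕ × ℕ × Option ℕ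
  | 0 => (0, 0, none)
  | c + 1 =>
    let s := scan k j m c
    if colMinus k m (c + 1) j then (s.1 + 1, s.2.1, s.2.2)
    else if colPlus k m (c + 1) j then
      (if s.1 = 0 then (0, s.2.1 + 1, some (c + 1)) else (s.1 - 1, s.2.1, s.2.2))
    else s

/-- `φ_j` of a tableau: the number of unbracketed `+`'s in the `j`-signature -/
noncomputable def phi (k l j : ℕ) (m : ℕ → ℕ → ℕ) : ℕ := (scan k j m l).2.1

/-- the column on which `f_j` acts (leftmost unbracketed `+`), if any -/
noncomputable def fcol (k l j : ℕ) (m : ℕ → ℕ → ℕ) : Option ℕ := (scan k j m l).2.2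

open Classical in
/-- the Kashiwara operator `f_j` (`1 ≤ j ≤ n`): change the entry `j` to `j+1`
in the column given by the signature rule, undefined (`none`) if there is no
unbracketed `+`. -/
noncomputable def f (k l j : ℕ) (m : ℕ → ℕ → ℕ) : Option (ℕ → ℕ → ℕ) :=
  (fcol k l j m).map (fun c => fun i c' =>
    if c' = c ∧ m i c' = j then j + 1 else m i c')

/-- `p`-fold application of `f_j` (undefined if some step is undefined) -/
noncomputable def fpow (k l j : ℕ) : ℕ → (ℕ → ℕ → ℕ) → Option (ℕ → ℕ → ℕ)
  | 0, m => some m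
  | p + 1, m => (f k l j m).bind (fpow k l j p)

/-- the ground-state tableau `m_{i,i'} = i` -/
def m0 (k l : ℕ) : ℕ → ℕ → ℕ := fun i c =>
  if 1 ≤ i ∧ i ≤ k ∧ 1 ≤ c ∧ c ≤ l then i else 0

/-- the operator index used at step `a`: `i^{(a)} = k - g + r` with
`g = ⌊(a-1)/(n+1-k)⌋` and `r = (a-1) - (n+1-k)g`. -/
def op (n k a : ℕ) : ℕ := k - (a - 1) / (n + 1 - k) + (a - 1) % (n + 1 - k)

end ATab

namespace ATab

/-- the sets `B_0 = {m0}`, `B_a = ⋃_{p ≥ 0} f_{k-g+r}^p B_{a-1} \ {0}` -/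
def BSet (n k l : ℕ) : ℕ → Set (ℕ → ℕ → ℕ)
  | 0 => {m0 k l}
  | a + 1 => {t | ∃ s ∈ BSet n k l a, ∃ p : ℕ, fpow k l (op n k (a + 1)) p s = some t}

end ATab


namespace ATab

section Basic
variable {n k l : ℕ} {m : ℕ → ℕ → ℕ}

lemma col_add (h : isTab n k l m) {i c : ℕ} (h1 : 1 ≤ i) (h3 : 1 ≤ c) (h4 : c ≤ l) :
    ∀ d, i + d ≤ k → m i c + d ≤ m (i + d) c := by
  intro d
  induction d with
  | zero => simp
  | succ e ih =>
    intro hd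
    have h2 := ih (by omega)
    have h5 := h.2.2.1 (i + e) c (by omega) (by omega) h3 h4
    show m i c + (e + 1) ≤ m (i + e + 1) c
    omega

lemma col_strict (h : isTab n k l m) {i i' c : ℕ} (h1 : 1 ≤ i) (hii : i < i')
    (h2 : i' ≤ k) (h3 : 1 ≤ c) (h4 : c ≤ l) : m i c < m i' c := by
  have := col_add h h1 h3 h4 (i' - i) (by omega)
  have he : i + (i' - i) = i' := by omega
  rw [he] at this; omega

lemma row_mono (h : isTab n k l m) {i c c' : ℕ} (h1 : 1 ≤ i) (h2 : i ≤ k)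
    (h3 : 1 ≤ c) (hcc : c ≤ c') (h4 : c' ≤ l) : m i c ≤ m i c' := by
  obtain ⟨d, rfl⟩ : ∃ d, c' = c + d := ⟨c' - c, by omega⟩
  clear hcc
  induction d with
  | zero => rfl
  | succ e ih =>
    have h5 := h.2.1 i (c + e) h1 h2 (by omega) (by omega)
    have h6 := ih (by omega)
    show m i c ≤ m i (c + e + 1)
    omega

lemma row_ge (h : isTab n k l m) {i c : ℕ} (h1 : 1 ≤ i) (h2 : i ≤ k)
    (h3 : 1 ≤ c) (h4 : c ≤ l) : i ≤ m i c := by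
  have h5 := (h.1 1 c (by omega) (by omega) h3 h4).1
  rcases Nat.eq_or_lt_of_le h1 with he | hlt
  · subst he; omega
  · have := col_add h (le_refl 1) h3 h4 (i - 1) (by omega)
    have he : 1 + (i - 1) = i := by omega
    rw [he] at this; omega

lemma row_le_top (h : isTab n k l m) {i c : ℕ} (h1 : 1 ≤ i) (h2 : i ≤ k)
    (h3 : 1 ≤ c) (h4 : c ≤ l) : m i c + (k - i) ≤ n + 1 := by
  have hk : m k c ≤ n + 1 := (h.1 k c (by omega) le_rfl h3 h4).2
  have := col_add h h1 h3 h4 (k - i) (by omega)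
  have he : i + (k - i) = k := by omega
  rw [he] at this; omega

lemma col_uniq (h : isTab n k l m) {c v i i' : ℕ} (hc1 : 1 ≤ c) (hcl : c ≤ l) (hv : 1 ≤ v)
    (hi : m i c = v) (hi' : m i' c = v) : i = i' := by
  have hr : ∀ p : ℕ, m p c = v → 1 ≤ p ∧ p ≤ k := by
    intro p hp
    by_contra hx
    have := h.2.2.2 p c (by omega)
    omega
  obtain ⟨ha, hb⟩ := hr i hi
  obtain ⟨ha', hb'⟩ := hr i' hi'
  rcases Nat.lt_trichotomy i i' with hlt | heq | hgt
  · have := col_strict h ha hlt hb' hc1 hcl; omega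
  · exact heq
  · have := col_strict h ha' hgt hb hc1 hcl; omega

end Basic

section Scan
variable {k j : ℕ} {m : ℕ → ℕ → ℕ}

lemma scan_zero : scan k j m 0 = (0, 0, none) := rfl

lemma scan_minus {c : ℕ} (hm : colMinus k m (c + 1) j) :
    scan k j m (c + 1) = ((scan k j m c).1 + 1, (scan k j m c).2.1, (scan k j m c).2.2) := by
  rw [scan]; simp [hm]

lemma scan_plus0 {c : ℕ} (hm : ¬ colMinus k m (c + 1) j) (hp : colPlus k m (c + 1) j)
    (hu : (scan k j m c).1 = 0) :
    scan k j m (c + 1) = (0, (scan k j m c).2.1 + 1, some (c + 1)) := by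
  rw [scan]; simp [hm, hp, hu]

lemma scan_plus1 {c : ℕ} (hm : ¬ colMinus k m (c + 1) j) (hp : colPlus k m (c + 1) j)
    (hu : (scan k j m c).1 ≠ 0) :
    scan k j m (c + 1) = ((scan k j m c).1 - 1, (scan k j m c).2.1, (scan k j m c).2.2) := by
  rw [scan]; simp [hm, hp, hu]

lemma scan_none {c : ℕ} (hm : ¬ colMinus k m (c + 1) j) (hp : ¬ colPlus k m (c + 1) j) :
    scan k j m (c + 1) = scan k j m c := by
  rw [scan]; simp [hm, hp]

lemma colHas_congr {m' : ℕ → ℕ → ℕ} {c : ℕ} (h : ∀ i, 1 ≤ i → i ≤ k → m i c = m' i c) (v : ℕ) :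
    colHas k m c v ↔ colHas k m' c v := by
  constructor <;> rintro ⟨i, hi, he⟩ <;> refine ⟨i, hi, ?_⟩ <;>
    simp only [Finset.mem_Icc] at hi
  · rw [← h i hi.1 hi.2]; exact he
  · rw [h i hi.1 hi.2]; exact he

lemma scan_congr {m' : ℕ → ℕ → ℕ} (C : ℕ)
    (h : ∀ c, 1 ≤ c → c ≤ C → ∀ i, 1 ≤ i → i ≤ k → m i c = m' i c) :
    scan k j m C = scan k j m' C := by
  induction C with
  | zero => rfl
  | succ c ih =>
    have hh : ∀ v, colHas k m (c + 1) v ↔ colHas k m' (c + 1) v :=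
      colHas_congr (fun i h1 h2 => h (c + 1) (by omega) le_rfl i h1 h2)
    have hmm : colMinus k m (c + 1) j ↔ colMinus k m' (c + 1) j := by
      unfold colMinus; rw [hh, hh]
    have hpp : colPlus k m (c + 1) j ↔ colPlus k m' (c + 1) j := by
      unfold colPlus; rw [hh, hh]
    have ih' := ih (fun c' h1 h2 i a b => h c' h1 (by omega) i a b)
    by_cases h1 : colMinus k m (c + 1) j
    · rw [scan_minus h1, scan_minus (hmm.mp h1), ih']
    · by_cases h2 : colPlus k m (c + 1) j
      · by_cases h3 : (scan k j m c).1 = 0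
        · rw [scan_plus0 h1 h2 h3, scan_plus0 (fun hx => h1 (hmm.mpr hx)) (hpp.mp h2) (ih' ▸ h3), ih']
        · rw [scan_plus1 h1 h2 h3, scan_plus1 (fun hx => h1 (hmm.mpr hx)) (hpp.mp h2) (ih' ▸ h3), ih']
      · rw [scan_none h1 h2, scan_none (fun hx => h1 (hmm.mpr hx)) (fun hx => h2 (hpp.mpr hx)), ih']

lemma o_some_le : ∀ C c, (scan k j m C).2.2 = some c → 1 ≤ c ∧ c ≤ C := by
  intro C
  induction C with
  | zero => intro c h; simp [scan_zero] at h
  | succ C ih =>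
    intro c h
    by_cases h1 : colMinus k m (C + 1) j
    · rw [scan_minus h1] at h; have := ih c h; omega
    · by_cases h2 : colPlus k m (C + 1) j
      · by_cases h3 : (scan k j m C).1 = 0
        · rw [scan_plus0 h1 h2 h3] at h
          simp at h; omega
        · rw [scan_plus1 h1 h2 h3] at h; have := ih c h; omega
      · rw [scan_none h1 h2] at h; have := ih c h; omega

lemma o_back {C c : ℕ} (h : (scan k j m (C + 1)).2.2 = some c) (hc : c ≤ C) :
    (scan k j m C).2.2 = some c := by
  by_cases h1 : colMinus k m (C + 1) j
  · rw [scan_minus h1] at h; exact h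
  · by_cases h2 : colPlus k m (C + 1) j
    · by_cases h3 : (scan k j m C).1 = 0
      · rw [scan_plus0 h1 h2 h3] at h; simp at h; omega
      · rw [scan_plus1 h1 h2 h3] at h; exact h
    · rw [scan_none h1 h2] at h; exact h

lemma o_persist {l c : ℕ} (h : (scan k j m l).2.2 = some c) :
    ∀ C, c ≤ C → C ≤ l → (scan k j m C).2.2 = some c := by
  intro C hc hC
  obtain ⟨d, rfl⟩ : ∃ d, l = C + d := ⟨l - C, by omega⟩
  clear hC
  induction d with
  | zero => exact h
  | succ e ih =>
    have h' : (scan k j m (C + e + 1)).2.2 = some c := by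
      have he : C + (e + 1) = C + e + 1 := rfl
      rw [← he]; exact h
    exact ih (o_back h' (by omega))

/-- the key specification of `fcol` -/
lemma fcol_spec {l c : ℕ} (h : (scan k j m l).2.2 = some c) :
    1 ≤ c ∧ c ≤ l ∧ colPlus k m c j ∧ ¬ colMinus k m c j ∧
    (scan k j m (c - 1)).1 = 0 ∧ (scan k j m c).1 = 0 ∧
    (∀ C, c ≤ C → C ≤ l → (scan k j m C).2.2 = some c) := by
  obtain ⟨hc1, hcl⟩ := o_some_le l c h
  have hpersist := o_persist h
  have hc : (scan k j m c).2.2 = some c := hpersist c le_rfl hcl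
  obtain ⟨d, rfl⟩ : ∃ d, c = d + 1 := ⟨c - 1, by omega⟩
  have hprev : ¬ ((scan k j m d).2.2 = some (d + 1)) := by
    intro hx; have := o_some_le d (d + 1) hx; omega
  by_cases h1 : colMinus k m (d + 1) j
  · rw [scan_minus h1] at hc; exact absurd hc hprev
  · by_cases h2 : colPlus k m (d + 1) j
    · by_cases h3 : (scan k j m d).1 = 0
      · have hs := scan_plus0 h1 h2 h3
        rw [hs] at hc ⊢
        refine ⟨by omega, hcl, h2, h1, by simpa using h3, rfl, hpersist⟩
      · rw [scan_plus1 h1 h2 h3] at hc; exact absurd hc hprev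
    · rw [scan_none h1 h2] at hc; exact absurd hc hprev

end Scan

section Main
variable {n k l : ℕ}

/-- closure of the sets under one application of `f_j` (given the scan data) -/
lemma f_closure {R j : ℕ} {s t : ℕ → ℕ → ℕ} {c : ℕ}
    (hR1 : 1 ≤ R) (hRk : R ≤ k) (hRj : R ≤ j) (hjn : j ≤ n)
    (hs : isTab n k l s)
    (hfr : ∀ i c', 1 ≤ i → i < R → 1 ≤ c' → c' ≤ l → s i c' = i)
    (hbd : ∀ c', 1 ≤ c' → c' ≤ l → s R c' ≤ j + 1)
    (hc1 : 1 ≤ c) (hcl : c ≤ l)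
    (hplus : colPlus k s c j)
    (hnext : c < l → ¬ colHas k s (c + 1) j ∨ colHas k s (c + 1) (j + 1))
    (ht : t = fun i c' => if c' = c ∧ s i c' = j then j + 1 else s i c') :
    isTab n k l t ∧ (∀ i c', 1 ≤ i → i < R → 1 ≤ c' → c' ≤ l → t i c' = i) ∧
    (∀ c', 1 ≤ c' → c' ≤ l → t R c' ≤ j + 1) := by
  obtain ⟨⟨i₀, hi₀mem, hi₀⟩, hnp1⟩ := hplus
  simp only [Finset.mem_Icc] at hi₀mem
  have hj1 : 1 ≤ j := by omega
  have huniq : ∀ i, s i c = j → i = i₀ := fun i hi => col_uniq hs hc1 hcl hj1 hi hi₀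
  have hnj1 : ∀ p, 1 ≤ p → p ≤ k → s p c ≠ j + 1 := by
    intro p hp1 hp2 hpe
    exact hnp1 ⟨p, Finset.mem_Icc.mpr ⟨hp1, hp2⟩, hpe⟩
  -- the key right-neighbour fact
  have hright : c < l → j + 1 ≤ s i₀ (c + 1) := by
    intro hcl'
    have h1 : j ≤ s i₀ (c + 1) := hi₀ ▸ hs.2.1 i₀ c hi₀mem.1 hi₀mem.2 hc1 hcl'
    rcases Nat.lt_or_ge j (s i₀ (c + 1)) with hgt | hle
    · omega
    · exfalso
      have he : s i₀ (c + 1) = j := by omega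
      have hhas : colHas k s (c + 1) j := ⟨i₀, Finset.mem_Icc.mpr hi₀mem, he⟩
      rcases hnext hcl' with hx | hx
      · exact hx hhas
      · obtain ⟨p, hpmem, hpe⟩ := hx
        simp only [Finset.mem_Icc] at hpmem
        have hpi : i₀ < p := by
          rcases Nat.lt_trichotomy p i₀ with h' | h' | h'
          · have := col_strict (c := c + 1) hs hpmem.1 h' hi₀mem.2 (by omega) (by omega)
            omega
          · subst h'; omega
          · exact h'
        have hp1 : p = i₀ + 1 := by
          by_contra hne
          have hb1 := col_strict (c := c + 1) hs (by omega : 1 ≤ i₀ + 1)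
            (by omega : i₀ + 1 < p) hpmem.2 (by omega) (by omega)
          have hb2 := col_strict (c := c + 1) hs hi₀mem.1 (by omega : i₀ < i₀ + 1)
            (by omega) (by omega) (by omega)
          omega
        subst hp1
        have hlt := col_strict (c := c) hs hi₀mem.1 (by omega : i₀ < i₀ + 1) hpmem.2 hc1 hcl
        have hle' := hs.2.1 (i₀ + 1) c (by omega) hpmem.2 hc1 hcl'
        have : s (i₀ + 1) c = j + 1 := by omega
        exact hnj1 (i₀ + 1) (by omega) hpmem.2 this
  have htv : ∀ i c', t i c' = if c' = c ∧ s i c' = j then j + 1 else s i c' := by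
    subst ht; intro i c'; rfl
  clear ht
  refine ⟨⟨?_, ?_, ?_, ?_⟩, ?_, ?_⟩
  · -- bounds
    intro i c' h1 h2 h3 h4
    rw [htv]
    by_cases hx : c' = c ∧ s i c' = j
    · rw [if_pos hx]; omega
    · rw [if_neg hx]; exact hs.1 i c' h1 h2 h3 h4
  · -- rows weakly increasing
    intro i c' h1 h2 h3 h4
    rw [htv, htv]
    by_cases hx : c' = c ∧ s i c' = j
    · obtain ⟨rfl, hxe⟩ := hx
      have hii : i = i₀ := huniq i hxe
      subst hii
      have hy : ¬ (c' + 1 = c' ∧ s i (c' + 1) = j) := by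
        intro hy; omega
      rw [if_pos ⟨rfl, hxe⟩, if_neg hy]
      have := hright h4
      omega
    · rw [if_neg hx]
      by_cases hy : c' + 1 = c ∧ s i (c' + 1) = j
      · rw [if_pos hy]
        have := hs.2.1 i c' h1 h2 h3 h4
        omega
      · rw [if_neg hy]; exact hs.2.1 i c' h1 h2 h3 h4
  · -- columns strictly increasing
    intro i c' h1 h2 h3 h4
    rw [htv, htv]
    by_cases hx : c' = c ∧ s i c' = j
    · obtain ⟨rfl, hxe⟩ := hx
      have hii : i = i₀ := huniq i hxe
      have hy : ¬ (c' = c' ∧ s (i + 1) c' = j) := by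
        rintro ⟨hyc, hye⟩
        have := huniq (i + 1) hye
        omega
      rw [if_pos ⟨rfl, hxe⟩, if_neg hy]
      have hlt := col_strict (c := c') hs h1 (by omega : i < i + 1) (by omega) h3 h4
      have hne := hnj1 (i + 1) (by omega) (by omega)
      omega
    · rw [if_neg hx]
      by_cases hy : c' = c ∧ s (i + 1) c' = j
      · rw [if_pos hy]
        have := col_strict (c := c') hs h1 (by omega : i < i + 1) (by omega) h3 h4
        omega
      · rw [if_neg hy]
        exact col_strict (c := c') hs h1 (by omega) (by omega) h3 h4
  · -- zeros outside
    intro i c' hcase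
    have hz := hs.2.2.2 i c' hcase
    rw [htv, if_neg (by omega : ¬ (c' = c ∧ s i c' = j))]
    exact hz
  · -- frozen rows
    intro i c' h1 h2 h3 h4
    have he := hfr i c' h1 h2 h3 h4
    rw [htv, if_neg (by omega : ¬ (c' = c ∧ s i c' = j))]
    exact he
  · -- bound on row R
    intro c' h3 h4
    rw [htv]
    by_cases hx : c' = c ∧ s R c' = j
    · rw [if_pos hx]
    · rw [if_neg hx]; exact hbd c' h3 h4

end Main

section EStep
variable {n k l : ℕ}

/-- backward step: any element of `S_{j+1}` whose `R`-th row actually contains a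
`j+1` is in the image of `f_j` applied to a smaller element of `S_{j+1}`. -/
lemma e_step {R j : ℕ} {t : ℕ → ℕ → ℕ}
    (hR1 : 1 ≤ R) (hRk : R ≤ k) (hRj : R ≤ j) (hl : 1 ≤ l)
    (ht : isTab n k l t)
    (hfr : ∀ i c, 1 ≤ i → i < R → 1 ≤ c → c ≤ l → t i c = i)
    (hbd : ∀ c, 1 ≤ c → c ≤ l → t R c ≤ j + 1)
    (hbad : t R l = j + 1) :
    ∃ s : ℕ → ℕ → ℕ,
      isTab n k l s ∧ (∀ i c, 1 ≤ i → i < R → 1 ≤ c → c ≤ l → s i c = i) ∧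
      (∀ c, 1 ≤ c → c ≤ l → s R c ≤ j + 1) ∧
      f k l j s = some t ∧
      (∀ i c, s i c ≤ t i c) ∧
      (∃ i₀ c₀, 1 ≤ i₀ ∧ i₀ ≤ k ∧ 1 ≤ c₀ ∧ c₀ ≤ l ∧ s i₀ c₀ < t i₀ c₀) := by
  have hj1 : 1 ≤ j := by omega
  -- column l is a minus column
  have hlminus : colMinus k t l j := by
    constructor
    · exact ⟨R, Finset.mem_Icc.mpr ⟨hR1, hRk⟩, hbad⟩
    · rintro ⟨p, hp, hpe⟩
      simp only [Finset.mem_Icc] at hp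
      rcases Nat.lt_trichotomy p R with h' | h' | h'
      · have := hfr p l hp.1 h' (by omega) le_rfl; omega
      · subst h'; omega
      · have := col_strict (c := l) ht hR1 h' hp.2 (by omega) le_rfl
        omega
  have hul : 1 ≤ (scan k j t l).1 := by
    obtain ⟨l', rfl⟩ : ∃ l', l = l' + 1 := ⟨l - 1, by omega⟩
    rw [scan_minus hlminus]
    omega
  -- the column on which e acts
  set P : ℕ → Prop := fun c => 1 ≤ c ∧ (scan k j t (c - 1)).1 = 0 with hP
  have hP1 : P 1 := ⟨le_rfl, by simp [scan_zero]⟩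
  set c₀ := Nat.findGreatest P l with hc₀def
  have hc₀1 : 1 ≤ c₀ := Nat.le_findGreatest hl hP1
  have hc₀l : c₀ ≤ l := Nat.findGreatest_le l
  have hPc₀ : P c₀ := Nat.findGreatest_spec hl hP1
  have hu0 : (scan k j t (c₀ - 1)).1 = 0 := hPc₀.2
  have hupos : ∀ C, c₀ ≤ C → C ≤ l → 1 ≤ (scan k j t C).1 := by
    intro C hC1 hC2
    by_contra hx
    have hx0 : (scan k j t C).1 = 0 := by omega
    rcases Nat.eq_or_lt_of_le hC2 with he | hlt
    · subst he; omega
    · have : C + 1 ≤ Nat.findGreatest P l :=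
        Nat.le_findGreatest (by omega) ⟨by omega, by simpa using hx0⟩
      omega
  -- c₀ is a minus column
  obtain ⟨d, hd⟩ : ∃ d, c₀ = d + 1 := ⟨c₀ - 1, by omega⟩
  have hud : (scan k j t d).1 = 0 := by rw [hd] at hu0; simpa using hu0
  have hc₀minus : colMinus k t c₀ j := by
    have huc := hupos c₀ le_rfl hc₀l
    rw [hd] at huc ⊢
    by_contra h1
    by_cases h2 : colPlus k t (d + 1) j
    · rw [scan_plus0 h1 h2 hud] at huc; omega
    · rw [scan_none h1 h2] at huc; omega
  have hcm := hc₀minus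
  obtain ⟨⟨i₀, hi₀mem, hi₀⟩, hnoj⟩ := hcm
  simp only [Finset.mem_Icc] at hi₀mem
  have hi₀R : R ≤ i₀ := by
    by_contra hx
    have := hfr i₀ c₀ hi₀mem.1 (by omega) (by omega) hc₀l
    omega
  -- the modified tableau
  set s : ℕ → ℕ → ℕ := fun i c => if i = i₀ ∧ c = c₀ then j else t i c with hsdef
  have hsv : ∀ i c, s i c = if i = i₀ ∧ c = c₀ then j else t i c := fun i c => rfl
  have hsoff : ∀ c, c ≠ c₀ → ∀ i, s i c = t i c := by
    intro c hc i; rw [hsv, if_neg (by tauto)]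
  have hsle : ∀ i c, s i c ≤ t i c := by
    intro i c
    rw [hsv]
    by_cases hx : i = i₀ ∧ c = c₀
    · rw [if_pos hx]; rw [hx.1, hx.2] at *; omega
    · rw [if_neg hx]
  have hsi₀ : s i₀ c₀ = j := by rw [hsv, if_pos ⟨rfl, rfl⟩]
  -- the hard left-neighbour fact
  have hleft : 2 ≤ c₀ → t i₀ (c₀ - 1) ≤ j := by
    intro hc2
    by_contra hx
    have hmono := row_mono (c := c₀ - 1) (c' := c₀) ht hi₀mem.1 hi₀mem.2 (by omega) (by omega) hc₀l
    have he : t i₀ (c₀ - 1) = j + 1 := by omega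
    by_cases hhas : colHas k t (c₀ - 1) j
    · obtain ⟨p, hpmem, hpe⟩ := hhas
      simp only [Finset.mem_Icc] at hpmem
      have hpi : p < i₀ := by
        rcases Nat.lt_trichotomy p i₀ with h' | h' | h'
        · exact h'
        · subst h'; omega
        · have := col_strict (c := c₀ - 1) ht hi₀mem.1 h' hpmem.2 (by omega) (by omega)
          omega
      have hp1 : p = i₀ - 1 := by
        by_contra hne
        have hb1 := col_strict (c := c₀ - 1) ht hpmem.1 (by omega : p < i₀ - 1)
          (by omega) (by omega) (by omega)
        have hb2 := col_strict (c := c₀ - 1) ht (by omega : 1 ≤ i₀ - 1)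
          (by omega : i₀ - 1 < i₀) (by omega) (by omega) (by omega)
        omega
      subst hp1
      have hm1 := row_mono (c := c₀ - 1) (c' := c₀) ht (by omega : 1 ≤ i₀ - 1) (by omega)
        (by omega) (by omega) hc₀l
      have hm2 := col_strict (c := c₀) ht (by omega : 1 ≤ i₀ - 1) (by omega : i₀ - 1 < i₀)
        hi₀mem.2 (by omega) hc₀l
      exact hnoj ⟨i₀ - 1, Finset.mem_Icc.mpr ⟨by omega, by omega⟩, by omega⟩
    · -- column c₀ - 1 is a minus column, contradicting u (c₀ - 1) = 0
      have hminus : colMinus k t (c₀ - 1) j :=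
        ⟨⟨i₀, Finset.mem_Icc.mpr hi₀mem, he⟩, hhas⟩
      obtain ⟨d', hd'⟩ : ∃ d', c₀ - 1 = d' + 1 := ⟨c₀ - 2, by omega⟩
      rw [hd'] at hminus hu0
      rw [scan_minus hminus] at hu0
      omega
  -- s is a tableau
  have hstab : isTab n k l s := by
    refine ⟨?_, ?_, ?_, ?_⟩
    · intro i c h1 h2 h3 h4
      rw [hsv]
      by_cases hx : i = i₀ ∧ c = c₀
      · rw [if_pos hx]
        have := (ht.1 i c h1 h2 h3 h4).2
        rw [hx.1, hx.2] at this
        omega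
      · rw [if_neg hx]; exact ht.1 i c h1 h2 h3 h4
    · intro i c h1 h2 h3 h4
      rw [hsv, hsv]
      by_cases hx : i = i₀ ∧ c = c₀
      · obtain ⟨rfl, rfl⟩ := hx
        rw [if_pos ⟨rfl, rfl⟩, if_neg (show ¬ (i = i ∧ c₀ + 1 = c₀) by omega)]
        have := row_mono (c := c₀) (c' := c₀ + 1) ht hi₀mem.1 hi₀mem.2 h3 (by omega) (by omega)
        omega
      · rw [if_neg hx]
        by_cases hy : i = i₀ ∧ c + 1 = c₀
        · obtain ⟨rfl, hy2⟩ := hy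
          rw [if_pos ⟨rfl, hy2⟩]
          have hle := hleft (by omega)
          have hcc : c = c₀ - 1 := by omega
          rw [hcc]
          exact hle
        · rw [if_neg hy]; exact ht.2.1 i c h1 h2 h3 h4
    · intro i c h1 h2 h3 h4
      rw [hsv, hsv]
      by_cases hx : i = i₀ ∧ c = c₀
      · obtain ⟨rfl, rfl⟩ := hx
        rw [if_pos ⟨rfl, rfl⟩, if_neg (show ¬ (i + 1 = i ∧ c₀ = c₀) by omega)]
        have := col_strict (c := c₀) ht h1 (by omega : i < i + 1) (by omega) h3 h4
        omega
      · rw [if_neg hx]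
        by_cases hy : i + 1 = i₀ ∧ c = c₀
        · obtain ⟨hy1, hy2⟩ := hy
          rw [if_pos ⟨hy1, hy2⟩, hy2]
          have hlt := col_strict (c := c) ht h1 (by omega : i < i + 1) (by omega) h3 h4
          have hne : t i c₀ ≠ j := by
            intro hee
            exact hnoj ⟨i, Finset.mem_Icc.mpr ⟨h1, by omega⟩, hee⟩
          rw [hy1, hy2] at hlt
          omega
        · rw [if_neg hy]
          exact col_strict (c := c) ht h1 (by omega) (by omega) h3 h4
    · intro i c hcase
      have hz := ht.2.2.2 i c hcase
      rw [hsv, if_neg ?_]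
      · exact hz
      · rintro ⟨rfl, rfl⟩
        omega
  -- frozen rows and bound are preserved
  have hsfr : ∀ i c, 1 ≤ i → i < R → 1 ≤ c → c ≤ l → s i c = i := by
    intro i c h1 h2 h3 h4
    rw [hsv, if_neg ?_]
    · exact hfr i c h1 h2 h3 h4
    · rintro ⟨rfl, rfl⟩; omega
  have hsbd : ∀ c, 1 ≤ c → c ≤ l → s R c ≤ j + 1 := by
    intro c h3 h4
    have := hsle R c
    have := hbd c h3 h4
    omega
  -- column c₀ of s is a plus column
  have hsplus : colPlus k s c₀ j := by
    constructor
    · exact ⟨i₀, Finset.mem_Icc.mpr hi₀mem, hsi₀⟩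
    · rintro ⟨p, hpmem, hpe⟩
      simp only [Finset.mem_Icc] at hpmem
      have hpne : p ≠ i₀ := by
        intro h'; rw [h', hsi₀] at hpe; omega
      rw [hsv, if_neg (by tauto)] at hpe
      have := col_uniq (v := j + 1) ht (by omega) hc₀l (by omega) hpe hi₀
      omega
  have hsminus : ¬ colMinus k s c₀ j := by
    rintro ⟨-, hx⟩
    exact hx ⟨i₀, Finset.mem_Icc.mpr hi₀mem, hsi₀⟩
  -- scans agree strictly below c₀
  have hscan_lo : ∀ C, C < c₀ → scan k j s C = scan k j t C := by
    intro C hC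
    exact scan_congr C (fun c h1 h2 i a b => hsoff c (by omega) i)
  -- scan of s at c₀
  have hscan_c₀ : scan k j s c₀ = (0, (scan k j t d).2.1 + 1, some c₀) := by
    rw [hd]
    have hlo : scan k j s d = scan k j t d := hscan_lo d (by omega)
    rw [scan_plus0 (hd ▸ hsminus) (hd ▸ hsplus) (by rw [hlo]; exact hud), hlo]
  -- the invariant above c₀
  have hinv : ∀ e, c₀ + e ≤ l →
      (scan k j s (c₀ + e)).1 + 1 = (scan k j t (c₀ + e)).1 ∧
      (scan k j s (c₀ + e)).2.2 = some c₀ := by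
    intro e
    induction e with
    | zero =>
      intro _
      have hut : (scan k j t c₀).1 = 1 := by
        rw [hd]
        rw [scan_minus (hd ▸ hc₀minus : colMinus k t (d + 1) j), hud]
      simp only [Nat.add_zero]
      rw [hscan_c₀, hut]
      exact ⟨rfl, rfl⟩
    | succ e ih =>
      intro hel
      obtain ⟨ih1, ih2⟩ := ih (by omega)
      have hC : c₀ + (e + 1) = (c₀ + e) + 1 := rfl
      have hcolseq : ∀ v, colHas k s (c₀ + e + 1) v ↔ colHas k t (c₀ + e + 1) v :=
        colHas_congr (fun i h1 h2 => hsoff (c₀ + e + 1) (by omega) i)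
      have hmm : colMinus k s (c₀ + e + 1) j ↔ colMinus k t (c₀ + e + 1) j := by
        unfold colMinus; rw [hcolseq, hcolseq]
      have hpp : colPlus k s (c₀ + e + 1) j ↔ colPlus k t (c₀ + e + 1) j := by
        unfold colPlus; rw [hcolseq, hcolseq]
      rw [hC]
      by_cases h1 : colMinus k t (c₀ + e + 1) j
      · rw [scan_minus h1, scan_minus (hmm.mpr h1)]
        exact ⟨by omega, ih2⟩
      · by_cases h2 : colPlus k t (c₀ + e + 1) j
        · have hut : 1 ≤ (scan k j t (c₀ + e)).1 := hupos (c₀ + e) (by omega) (by omega)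
          have hut' : 1 ≤ (scan k j t (c₀ + e + 1)).1 := hupos (c₀ + e + 1) (by omega) (by omega)
          have hsu : (scan k j s (c₀ + e)).1 ≠ 0 := by
            intro hx
            have hto : (scan k j t (c₀ + e)).1 = 1 := by omega
            rw [scan_plus1 h1 h2 (by omega)] at hut'
            omega
          rw [scan_plus1 h1 h2 (by omega), scan_plus1 (fun hx => h1 (hmm.mp hx)) (hpp.mpr h2) hsu]
          exact ⟨by omega, ih2⟩
        · rw [scan_none h1 h2, scan_none (fun hx => h1 (hmm.mp hx)) (fun hx => h2 (hpp.mp hx))]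
          exact ⟨ih1, ih2⟩
  have hfcol : fcol k l j s = some c₀ := by
    have := (hinv (l - c₀) (by omega)).2
    have he : c₀ + (l - c₀) = l := by omega
    rw [he] at this
    exact this
  -- f s = some t
  have hfs : f k l j s = some t := by
    rw [f, hfcol, Option.map_some]
    congr 1
    funext i c
    by_cases hc : c = c₀
    · subst hc
      by_cases hij : s i c₀ = j
      · rw [if_pos ⟨rfl, hij⟩]
        have hii : i = i₀ := by
          by_contra hne
          rw [hsv, if_neg (show ¬ (i = i₀ ∧ c₀ = c₀) from fun hx => hne hx.1)] at hij
          have hik : 1 ≤ i ∧ i ≤ k := by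
            by_contra hx
            have := ht.2.2.2 i c₀ (by omega)
            omega
          exact hnoj ⟨i, Finset.mem_Icc.mpr hik, hij⟩
        subst hii
        omega
      · rw [if_neg (show ¬ (c₀ = c₀ ∧ s i c₀ = j) from fun hx => hij hx.2)]
        have hne : i ≠ i₀ := by
          intro h'; rw [h', hsi₀] at hij; omega
        rw [hsv, if_neg (show ¬ (i = i₀ ∧ c₀ = c₀) from fun hx => hne hx.1)]
    · rw [if_neg (show ¬ (c = c₀ ∧ s i c = j) from fun hx => hc hx.1), hsoff c hc i]
  exact ⟨s, hstab, hsfr, hsbd, hfs,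
    hsle, ⟨i₀, c₀, hi₀mem.1, hi₀mem.2, by omega, hc₀l, by rw [hsi₀, hi₀]; omega⟩⟩

end EStep

section Steps
variable {n k l : ℕ}

/-- the intermediate sets -/
def SSet (n k l R b : ℕ) : Set (ℕ → ℕ → ℕ) :=
  {m | isTab n k l m ∧ (∀ i c, 1 ≤ i → i < R → 1 ≤ c → c ≤ l → m i c = i) ∧
       (∀ c, 1 ≤ c → c ≤ l → m R c ≤ b)}

lemma fpow_succ_right {k l j : ℕ} (p : ℕ) :
    ∀ m, fpow k l j (p + 1) m = (fpow k l j p m).bind (f k l j) := by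
  induction p with
  | zero =>
    intro m
    show (f k l j m).bind (fpow k l j 0) = (some m).bind (f k l j)
    rw [Option.bind_some]
    cases f k l j m with
    | none => rfl
    | some x => rfl
  | succ q ih =>
    intro m
    show (f k l j m).bind (fpow k l j (q + 1)) = ((f k l j m).bind (fpow k l j q)).bind (f k l j)
    rw [Option.bind_assoc]
    cases f k l j m with
    | none => rfl
    | some x => exact ih x

/-- membership is preserved by one application of `f` -/
lemma f_step_mem {R j : ℕ} {s t : ℕ → ℕ → ℕ}
    (hR1 : 1 ≤ R) (hRk : R ≤ k) (hRj : R ≤ j) (hjn : j ≤ n)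
    (hs : s ∈ SSet n k l R (j + 1)) (hf : f k l j s = some t) :
    t ∈ SSet n k l R (j + 1) := by
  obtain ⟨hstab, hfr, hbd⟩ := hs
  rw [f] at hf
  obtain ⟨c, hc, ht⟩ := Option.map_eq_some_iff.mp hf
  have hspec := fcol_spec (m := s) (hc : (scan k j s l).2.2 = some c)
  obtain ⟨hc1, hcl, hplus, hminus, hu0, hu0', hpers⟩ := hspec
  have hnext : c < l → ¬ colHas k s (c + 1) j ∨ colHas k s (c + 1) (j + 1) := by
    intro hcl'
    by_cases hhj : colHas k s (c + 1) j
    · right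
      by_contra hh1
      have hp' : colPlus k s (c + 1) j := ⟨hhj, hh1⟩
      have hm' : ¬ colMinus k s (c + 1) j := fun hx => hx.2 hhj
      have := hpers (c + 1) (by omega) (by omega)
      rw [scan_plus0 hm' hp' hu0'] at this
      simp at this
    · left; exact hhj
  exact f_closure hR1 hRk hRj hjn hstab hfr hbd hc1 hcl hplus hnext ht.symm

lemma fpow_mem {R j : ℕ}
    (hR1 : 1 ≤ R) (hRk : R ≤ k) (hRj : R ≤ j) (hjn : j ≤ n) (p : ℕ) :
    ∀ s t, s ∈ SSet n k l R (j + 1) → fpow k l j p s = some t →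
    t ∈ SSet n k l R (j + 1) := by
  induction p with
  | zero =>
    intro s t hs hp
    have hst : s = t := Option.some.inj hp
    exact hst ▸ hs
  | succ q ih =>
    intro s t hs hp
    rw [show fpow k l j (q + 1) s = (f k l j s).bind (fpow k l j q) from rfl] at hp
    cases hfs : f k l j s with
    | none => rw [hfs] at hp; simp at hp
    | some x =>
      rw [hfs] at hp
      simp only [Option.bind_some] at hp
      exact ih x t (f_step_mem hR1 hRk hRj hjn hs hfs) hp

/-- the total weight of a tableau -/
def W (k l : ℕ) (m : ℕ → ℕ → ℕ) : ℕ :=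
  ∑ i ∈ Finset.Icc 1 k, ∑ c ∈ Finset.Icc 1 l, m i c

lemma W_lt {s t : ℕ → ℕ → ℕ} (hle : ∀ i c, s i c ≤ t i c)
    {i₀ c₀ : ℕ} (hi1 : 1 ≤ i₀) (hik : i₀ ≤ k) (hc1 : 1 ≤ c₀) (hcl : c₀ ≤ l)
    (hlt : s i₀ c₀ < t i₀ c₀) : W k l s < W k l t := by
  apply Finset.sum_lt_sum
  · intro i _
    exact Finset.sum_le_sum (fun c _ => hle i c)
  · refine ⟨i₀, Finset.mem_Icc.mpr ⟨hi1, hik⟩, ?_⟩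
    apply Finset.sum_lt_sum
    · intro c _; exact hle i₀ c
    · exact ⟨c₀, Finset.mem_Icc.mpr ⟨hc1, hcl⟩, hlt⟩

/-- backward direction: every element of `S_{j+1}` is reachable from `S_j` -/
lemma bwd_reach {R j : ℕ}
    (hR1 : 1 ≤ R) (hRk : R ≤ k) (hRj : R ≤ j) (hl : 1 ≤ l) :
    ∀ N t, W k l t ≤ N → t ∈ SSet n k l R (j + 1) →
    ∃ s ∈ SSet n k l R j, ∃ p, fpow k l j p s = some t := by
  intro N
  induction N using Nat.strong_induction_on with
  | _ N ih =>
    intro t hW ht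
    obtain ⟨htab, hfr, hbd⟩ := ht
    by_cases hb : ∀ c, 1 ≤ c → c ≤ l → t R c ≤ j
    · exact ⟨t, ⟨htab, hfr, hb⟩, 0, rfl⟩
    · push_neg at hb
      obtain ⟨c', hc'1, hc'l, hc'⟩ := hb
      have hbad : t R l = j + 1 := by
        have h1 := row_mono (c := c') (c' := l) htab hR1 hRk hc'1 hc'l le_rfl
        have h2 := hbd l (by omega) le_rfl
        have h3 := hbd c' hc'1 hc'l
        omega
      obtain ⟨s, hstab, hsfr, hsbd, hfs, hsle, i₀, c₀, h1, h2, h3, h4, h5⟩ :=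
        e_step hR1 hRk hRj hl htab hfr hbd hbad
      have hWlt : W k l s < W k l t := W_lt hsle h1 h2 h3 h4 h5
      have hN : W k l s < N := by omega
      obtain ⟨s₀, hs₀, p, hp⟩ := ih (W k l s) hN s le_rfl ⟨hstab, hsfr, hsbd⟩
      refine ⟨s₀, hs₀, p + 1, ?_⟩
      rw [fpow_succ_right, hp]
      simpa using hfs

/-- the main step lemma: one level of the recursion -/
lemma step_lemma {R j : ℕ}
    (hR1 : 1 ≤ R) (hRk : R ≤ k) (hRj : R ≤ j) (hjn : j ≤ n) (hl : 1 ≤ l) :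
    {t | ∃ s ∈ SSet n k l R j, ∃ p, fpow k l j p s = some t} = SSet n k l R (j + 1) := by
  ext t
  constructor
  · rintro ⟨s, hs, p, hp⟩
    have hs' : s ∈ SSet n k l R (j + 1) :=
      ⟨hs.1, hs.2.1, fun c h1 h2 => le_trans (hs.2.2 c h1 h2) (by omega)⟩
    exact fpow_mem hR1 hRk hRj hjn p s t hs' hp
  · intro ht
    exact bwd_reach hR1 hRk hRj hl (W k l t) t le_rfl ht

end Steps

section Final
variable {n k l : ℕ}

lemma m0_isTab (hk : 1 ≤ k) (hkn : k ≤ n) (hl : 1 ≤ l) : isTab n k l (m0 k l) := by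
  refine ⟨?_, ?_, ?_, ?_⟩
  · intro i c h1 h2 h3 h4
    rw [m0, if_pos ⟨h1, h2, h3, h4⟩]
    omega
  · intro i c h1 h2 h3 h4
    rw [m0]; rw [m0]
    rw [if_pos ⟨h1, h2, h3, (by omega : c ≤ l)⟩, if_pos ⟨h1, h2, by omega, by omega⟩]
  · intro i c h1 h2 h3 h4
    rw [m0]; rw [m0]
    rw [if_pos ⟨h1, by omega, h3, h4⟩, if_pos ⟨by omega, by omega, h3, h4⟩]
    omega
  · intro i c hcase
    rw [m0, if_neg (by omega)]

lemma SSet_kk (hk : 1 ≤ k) (hkn : k ≤ n) (hl : 1 ≤ l) :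
    SSet n k l k k = {m0 k l} := by
  ext x
  constructor
  · rintro ⟨htab, hfr, hbd⟩
    show x = m0 k l
    funext i c
    rw [m0]
    by_cases hin : 1 ≤ i ∧ i ≤ k ∧ 1 ≤ c ∧ c ≤ l
    · rw [if_pos hin]
      obtain ⟨h1, h2, h3, h4⟩ := hin
      rcases Nat.lt_or_ge i k with hik | hik
      · exact hfr i c h1 hik h3 h4
      · have hi : i = k := by omega
        subst hi
        have := row_ge htab h1 h2 h3 h4
        have := hbd c h3 h4
        omega
    · rw [if_neg hin]
      exact htab.2.2.2 i c (by omega)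
  · intro hx
    have hx' : x = m0 k l := hx
    subst hx'
    refine ⟨m0_isTab hk hkn hl, ?_, ?_⟩
    · intro i c h1 h2 h3 h4
      rw [m0, if_pos ⟨h1, by omega, h3, h4⟩]
    · intro c h3 h4
      rw [m0, if_pos ⟨hk, le_rfl, h3, h4⟩]

lemma SSet_shift {R b : ℕ} (hl : 1 ≤ l) (hR1 : 1 ≤ R) (hRk : R + 1 ≤ k)
    (hb : n + 1 ≤ b + (k - (R + 1))) :
    SSet n k l (R + 1) b = SSet n k l R R := by
  ext x
  constructor
  · rintro ⟨htab, hfr, hbd⟩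
    refine ⟨htab, fun i c h1 h2 h3 h4 => hfr i c h1 (by omega) h3 h4, ?_⟩
    intro c h3 h4
    rw [hfr R c hR1 (by omega) h3 h4]
  · rintro ⟨htab, hfr, hbd⟩
    have hRR : ∀ c, 1 ≤ c → c ≤ l → x R c = R := by
      intro c h3 h4
      have := row_ge htab hR1 (by omega) h3 h4
      have := hbd c h3 h4
      omega
    refine ⟨htab, ?_, ?_⟩
    · intro i c h1 h2 h3 h4
      rcases Nat.lt_or_ge i R with h' | h'
      · exact hfr i c h1 h' h3 h4
      · have : i = R := by omega
        subst this
        exact hRR c h3 h4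
    · intro c h3 h4
      have := row_le_top htab (by omega : 1 ≤ R + 1) hRk h3 h4
      omega

lemma main_aux (n k l : ℕ) (hn : 2 ≤ n) (hk : 1 ≤ k) (hkn : k ≤ n) (hl : 1 ≤ l) :
    ∀ a, 1 ≤ a → a ≤ k * (n + 1 - k) →
      BSet n k l a = SSet n k l (k - (a - 1) / (n + 1 - k))
        (k - (a - 1) / (n + 1 - k) + (a - 1) % (n + 1 - k) + 1) := by
  have hm1 : 1 ≤ n + 1 - k := by omega
  intro a
  induction a with
  | zero => omega
  | succ a ih =>
    intro _ ha'
    have hBsucc : BSet n k l (a + 1) =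
        {t | ∃ s ∈ BSet n k l a, ∃ p, fpow k l (op n k (a + 1)) p s = some t} := rfl
    rcases Nat.eq_zero_or_pos a with h0 | h0
    · subst h0
      have hop : op n k 1 = k := by
        unfold op; simp
      have hids : (1 - 1 : ℕ) = 0 := rfl
      rw [hBsucc, hop]
      rw [show BSet n k l 0 = {m0 k l} from rfl, ← SSet_kk hk hkn hl]
      have hstep := step_lemma (n := n) (k := k) (l := l) (R := k) (j := k)
        hk le_rfl le_rfl hkn hl
      rw [hstep]
      simp only [hids, Nat.zero_div, Nat.zero_mod, Nat.sub_zero]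
    · have ha1 : 1 ≤ a := h0
      have ih' := ih ha1 (by omega)
      set q := (a - 1) / (n + 1 - k) with hqdef
      set r := (a - 1) % (n + 1 - k) with hrdef
      have hdm : (n + 1 - k) * q + r = a - 1 := Nat.div_add_mod (a - 1) (n + 1 - k)
      have hrlt : r < n + 1 - k := Nat.mod_lt _ (by omega)
      clear_value q r
      have hq : q < k := by
        have h1 : (n + 1 - k) * q ≤ a - 1 := by omega
        have h2 : a - 1 < k * (n + 1 - k) := by omega
        have h3 : (n + 1 - k) * q < (n + 1 - k) * k := by
          calc (n + 1 - k) * q ≤ a - 1 := h1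
          _ < k * (n + 1 - k) := h2
          _ = (n + 1 - k) * k := Nat.mul_comm _ _
        exact Nat.lt_of_mul_lt_mul_left h3
      have hsub : a + 1 - 1 = a := rfl
      by_cases hcase : r + 1 < n + 1 - k
      · -- same active row
        obtain ⟨hdiv, hmod⟩ : a / (n + 1 - k) = q ∧ a % (n + 1 - k) = r + 1 :=
          (Nat.div_mod_unique (by omega)).mpr ⟨by omega, hcase⟩
        have hop : op n k (a + 1) = k - q + r + 1 := by
          unfold op
          rw [hsub, hdiv, hmod]
          omega
        rw [hBsucc, hop, ih']
        have hstep := step_lemma (n := n) (k := k) (l := l) (R := k - q) (j := k - q + r + 1)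
          (by omega) (by omega) (by omega) (by omega) hl
        rw [hstep]
        rw [show a + 1 - 1 = a from rfl, hdiv, hmod]
        congr 1
      · -- move up one row
        have hr : r = n - k := by omega
        have ha2 : a = (n + 1 - k) * (q + 1) := by
          have : (n + 1 - k) * (q + 1) = (n + 1 - k) * q + (n + 1 - k) := by ring
          omega
        obtain ⟨hdiv, hmod⟩ : a / (n + 1 - k) = q + 1 ∧ a % (n + 1 - k) = 0 :=
          (Nat.div_mod_unique (by omega)).mpr ⟨by omega, by omega⟩
        have hqk : q + 1 < k := by
          have h2 : a < k * (n + 1 - k) := by omega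
          have h3 : (n + 1 - k) * (q + 1) < (n + 1 - k) * k := by
            calc (n + 1 - k) * (q + 1) = a := ha2.symm
            _ < k * (n + 1 - k) := h2
            _ = (n + 1 - k) * k := Nat.mul_comm _ _
          exact Nat.lt_of_mul_lt_mul_left h3
        have hop : op n k (a + 1) = k - q - 1 := by
          unfold op
          rw [hsub, hdiv, hmod]
          omega
        have hshift : SSet n k l (k - q) (k - q + r + 1) = SSet n k l (k - q - 1) (k - q - 1) := by
          have e3 : k - q = (k - q - 1) + 1 := by omega
          rw [e3]
          exact SSet_shift hl (by omega) (by omega) (by omega)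
        rw [hBsucc, hop, ih', hshift]
        have hstep := step_lemma (n := n) (k := k) (l := l) (R := k - q - 1) (j := k - q - 1)
          (by omega) (by omega) (by omega) (by omega) hl
        rw [hstep]
        rw [show a + 1 - 1 = a from rfl, hdiv, hmod]
        congr 1

end Final


end ATab

/-- in the `A_n^{(1)}` crystal `B(lΛ̄_k)`, for each `a` with
`g = ⌊(a-1)/(n+1-k)⌋` and `r = (a-1) - (n+1-k)g`, the set `B_a` obtained by the
recursion `B_0 = {m_{i,i'} = i}`, `B_a = ⋃_{p≥0} f_{k-g+r}^p B_{a-1} \ {0}`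
equals `{(m_{i,i'}) : m_{i,i'} = i for i < k-g, m_{k-g,i'} ≤ k-g+r+1}`. -/
theorem An1_Demazure_subsets (n k l : ℕ) (hn : 2 ≤ n) (hk : 1 ≤ k) (hkn : k ≤ n)
    (hl : 1 ≤ l) (a : ℕ) (ha : 1 ≤ a) (ha' : a ≤ k * (n + 1 - k)) :
    ATab.BSet n k l a =
      {m | ATab.isTab n k l m ∧
           (∀ i c, 1 ≤ i → i < k - (a - 1) / (n + 1 - k) → 1 ≤ c → c ≤ l →
              m i c = i) ∧
           (∀ c, 1 ≤ c → c ≤ l →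
              m (k - (a - 1) / (n + 1 - k)) c ≤
                k - (a - 1) / (n + 1 - k) + (a - 1) % (n + 1 - k) + 1)} := by
  exact ATab.main_aux n k l hn hk hkn hl a ha ha'
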